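/- arXiv:1506.08085 — 2 statements merged into one kernel-verified Lean document; each statement's English description precedes it below -/
import Mathlib

section
/- Let μ, φ, b be real numbers with μ ≠ 0. If (1+μ^2)*s ± (μ^2-1)*φ ± 4*μ*b = 0 and ∓2*(1+μ^2)*b*s - 2*β*E*φ = 0, where s = sqrt(Δ) ≥ 0 and β*E*φ satisfies the substitution relation (μ^2-1)*b - β*E = μ*φ, then φ^2 + 4*b^2 = 0, hence φ = 0 and b = 0. -/
theorem stmt_2_general (μ φ b β E s : ℝ) (hμ : μ ≠ 0)
    (h1 : (1 + μ ^ 2) * s + (μ ^ 2 - 1) * φ + 4 * μ * b = 0)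
    (h2 : -2 * (1 + μ ^ 2) * b * s - 2 * β * E * φ = 0)
    (hsub : μ * φ = (μ ^ 2 - 1) * b - β * E) :
    φ ^ 2 + 4 * b ^ 2 = 0 ∧ φ = 0 ∧ b = 0 := by
  -- `b * h1 + h2 / 2` eliminates `(1 + μ ^ 2) * s`; `hsub` then removes `β * E`.
  have hμsum : μ * (φ ^ 2 + 4 * b ^ 2) = 0 := by
    linear_combination (1 / 2) * h2 + b * h1 + φ * hsub
  have hsum : φ ^ 2 + 4 * b ^ 2 = 0 := (mul_eq_zero.mp hμsum).resolve_left hμ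
  have hφ : φ = 0 := by nlinarith [sq_nonneg φ, sq_nonneg b]
  have hb : b = 0 := by nlinarith [sq_nonneg φ, sq_nonneg b]
  exact ⟨hsum, hφ, hb⟩

theorem stmt_2 (μ φ b β E s : ℝ) (hμ : μ ≠ 0) (hs : 0 ≤ s)
    (h1 : (1 + μ ^ 2) * s + (μ ^ 2 - 1) * φ + 4 * μ * b = 0)
    (h2 : -2 * (1 + μ ^ 2) * b * s - 2 * β * E * φ = 0)
    (hsub : μ * φ = (μ ^ 2 - 1) * b - β * E) :
    φ ^ 2 + 4 * b ^ 2 = 0 ∧ φ = 0 ∧ b = 0 :=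
  stmt_2_general μ φ b β E s hμ h1 h2 hsub
end

section
/- Let η ≠ 0, σ > 0, β be real with σ^2 > 4β^2 and β ≠ 0. Define a(x) = sqrt(L(x)) with L(x) = σ*e^{2ηx} - β^2*e^{4ηx} - 1, b(x) = -β*e^{2ηx}, and c(x) = a(x) - a'(x)/η, on the open interval where L(x) > 0. Then a(x)*c(x) - b(x)^2 = -1 for all x in that interval. -/
open Real

theorem sqrt_mul_deriv_sqrt {f : ℝ → ℝ} {f' x : ℝ} (hf : HasDerivAt f f' x) (hx : 0 < f x) :
    √(f x) * deriv (fun y => √(f y)) x = f' / 2 := by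
  rw [(hf.sqrt hx.ne').deriv]
  field_simp

theorem hasDerivAt_const_mul_exp_const_mul (A k x : ℝ) :
    HasDerivAt (fun y => A * exp (k * y)) (k * (A * exp (k * x))) x := by
  simpa [mul_comm, mul_left_comm] using
    (((hasDerivAt_id x).const_mul k).exp).const_mul A

theorem exp_four_mul_eq_sq (t : ℝ) : exp (4 * t) = exp (2 * t) ^ 2 := by
  rw [← exp_nat_mul]
  ring_nf

/-- `a c = a² - (a a') / η = L - L' / (2η)`, and the exponential terms of `L - L' / (2η)`
collapse to `β² e^{4ηx} = b²`. -/
theorem stmt_5_general (η σ β : ℝ) (hη : η ≠ 0)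
    (L a b c : ℝ → ℝ)
    (hL : ∀ x, L x = σ * Real.exp (2 * η * x) - β ^ 2 * Real.exp (4 * η * x) - 1)
    (ha : ∀ x, a x = Real.sqrt (L x))
    (hb : ∀ x, b x = -β * Real.exp (2 * η * x))
    (hc : ∀ x, c x = a x - deriv a x / η) :
    ∀ x, L x > 0 → a x * c x - (b x) ^ 2 = -1 := by
  intro x hx
  have hL' : HasDerivAt L (2 * η * (σ * exp (2 * η * x)) - 4 * η * (β ^ 2 * exp (4 * η * x))) x := by
    rw [funext hL]
    exact ((hasDerivAt_const_mul_exp_const_mul σ _ x).sub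
      (hasDerivAt_const_mul_exp_const_mul (β ^ 2) _ x)).sub_const 1
  have ha' := sqrt_mul_deriv_sqrt hL' hx
  rw [← funext ha, ← ha] at ha'
  have hE : exp (4 * η * x) = exp (2 * η * x) ^ 2 := by
    simpa only [mul_assoc] using exp_four_mul_eq_sq (η * x)
  rw [hc, hb, mul_sub, mul_div_assoc', ha', ha, ← sq, sq_sqrt hx.le, hL, hE]
  field_simp
  ring

theorem stmt_5 (η σ β : ℝ) (hη : η ≠ 0) (hσ : 0 < σ)
    (hdisc : σ ^ 2 > 4 * β ^ 2) (hβ : β ≠ 0)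
    (L a b c : ℝ → ℝ)
    (hL : ∀ x, L x = σ * Real.exp (2 * η * x) - β ^ 2 * Real.exp (4 * η * x) - 1)
    (ha : ∀ x, a x = Real.sqrt (L x))
    (hb : ∀ x, b x = -β * Real.exp (2 * η * x))
    (hc : ∀ x, c x = a x - deriv a x / η) :
    ∀ x, L x > 0 → a x * c x - (b x) ^ 2 = -1 :=
  stmt_5_general η σ β hη L a b c hL ha hb hc
end
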